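/- For every ξ ∈ ℝⁿ, ε > 0, all indices i, k ∈ {1,…,n}, and every x ∈ ℝⁿ, writing u = u_{(ξ,ε)}: ∂_i u(x) ∂_k u(x) − ((n−2)/(4(n−1))) ∂_i ∂_k (u²)(x) = (1/n) ( |∇u(x)|² − ((n−2)/(4(n−1))) Δ(u²)(x) ) δ_{ik}, where δ_{ik} is the Kronecker delta and Δ is the Euclidean Laplacian. -/

import Mathlib

open scoped BigOperators

/-- The standard bubble `u_{(ξ,ε)}(x) = (ε/(ε² + |x−ξ|²))^{(n−2)/2}`. -/
noncomputable def bubble (n : ℕ) (ξ : EuclideanSpace ℝ (Fin n)) (ε : ℝ)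
    (x : EuclideanSpace ℝ (Fin n)) : ℝ :=
  (ε / (ε ^ 2 + ‖x - ξ‖ ^ 2)) ^ (((n : ℝ) - 2) / 2)

/-- Partial derivative in the `i`-th coordinate direction. -/
noncomputable def pder (n : ℕ) (i : Fin n) (f : EuclideanSpace ℝ (Fin n) → ℝ)
    (x : EuclideanSpace ℝ (Fin n)) : ℝ :=
  fderiv ℝ f x (EuclideanSpace.single i 1)

/-!
Write `t = ε² + |x − ξ|²` and `u = ε^{(n−2)/2} t^{−(n−2)/2}`. Then `∂ᵢu ∂ₖu` is a multiple of
`t^{−n} (xᵢ − ξᵢ)(xₖ − ξₖ)`, and with the constant `(n−2)/(4(n−1))` exactly this part of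
`∂ᵢ∂ₖ(u²)` cancels it, leaving a scalar multiple `λ δᵢₖ`. A tensor of the form `λ δᵢₖ` equals its
trace divided by `n` times `δᵢₖ`.
-/

theorem eq_one_div_card_mul_trace_mul_ite {ι : Type*} [Fintype ι] [DecidableEq ι]
    (M : ι → ι → ℝ) (c : ℝ) (hM : ∀ i k, M i k = c * if i = k then 1 else 0) (i k : ι) :
    M i k = 1 / Fintype.card ι * (∑ l, M l l) * if i = k then 1 else 0 := by
  have hcard : (Fintype.card ι : ℝ) ≠ 0 := by
    have : 0 < Fintype.card ι := Fintype.card_pos_iff.2 ⟨i⟩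
    positivity
  have htrace : ∑ l, M l l = Fintype.card ι * c := by simp [hM]
  rw [hM, htrace]
  field_simp

section Bubble

variable {n : ℕ} (ξ : EuclideanSpace ℝ (Fin n)) {ε : ℝ}

theorem hasFDerivAt_rpow_sq_add_dist_sq (hε : ε ≠ 0) (c : ℝ) (x : EuclideanSpace ℝ (Fin n)) :
    HasFDerivAt (fun y => (ε ^ 2 + ‖y - ξ‖ ^ 2) ^ c)
      ((2 * c * (ε ^ 2 + ‖x - ξ‖ ^ 2) ^ (c - 1)) • innerSL ℝ (x - ξ)) x := by
  have hpos : ε ^ 2 + ‖x - ξ‖ ^ 2 ≠ 0 := by positivity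
  have hbase : HasFDerivAt (fun y : EuclideanSpace ℝ (Fin n) => ε ^ 2 + ‖y - ξ‖ ^ 2)
      (2 • innerSL ℝ (x - ξ)) x := by
    simpa using (((hasFDerivAt_id x).sub_const ξ).norm_sq).const_add (ε ^ 2)
  refine (hbase.rpow_const (p := c) (Or.inl hpos)).congr_fderiv ?_
  rw [← Nat.cast_smul_eq_nsmul ℝ, smul_smul]
  congr 1
  push_cast
  ring

theorem pder_const_mul_rpow_sq_add_dist_sq (hε : ε ≠ 0) (A c : ℝ) (i : Fin n)
    (x : EuclideanSpace ℝ (Fin n)) :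
    pder n i (fun y => A * (ε ^ 2 + ‖y - ξ‖ ^ 2) ^ c) x
      = 2 * A * c * (ε ^ 2 + ‖x - ξ‖ ^ 2) ^ (c - 1) * (x i - ξ i) := by
  rw [pder, ((hasFDerivAt_rpow_sq_add_dist_sq ξ hε c x).const_mul A).fderiv]
  simp only [smul_apply, coe_innerSL_apply, EuclideanSpace.inner_single_right, PiLp.sub_apply,
    conj_trivial, smul_eq_mul, one_mul]
  ring

theorem pder_const_mul_rpow_sq_add_dist_sq_mul_sub (hε : ε ≠ 0) (A c : ℝ) (i k : Fin n)
    (x : EuclideanSpace ℝ (Fin n)) :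
    pder n i (fun y => A * ((ε ^ 2 + ‖y - ξ‖ ^ 2) ^ c * (y k - ξ k))) x
      = A * (2 * c * (ε ^ 2 + ‖x - ξ‖ ^ 2) ^ (c - 1) * (x i - ξ i) * (x k - ξ k)
        + (ε ^ 2 + ‖x - ξ‖ ^ 2) ^ c * if i = k then 1 else 0) := by
  have hcoord : HasFDerivAt (fun y : EuclideanSpace ℝ (Fin n) => y k - ξ k)
      (EuclideanSpace.proj k : EuclideanSpace ℝ (Fin n) →L[ℝ] ℝ) x :=
    (EuclideanSpace.proj k : EuclideanSpace ℝ (Fin n) →L[ℝ] ℝ).hasFDerivAt.sub_const (ξ k)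
  rw [pder, (((hasFDerivAt_rpow_sq_add_dist_sq ξ hε c x).fun_mul hcoord).const_mul A).fderiv]
  simp only [add_apply, smul_apply, smul_add, coe_innerSL_apply, EuclideanSpace.inner_single_right,
    PiLp.proj_apply, PiLp.single_apply, PiLp.sub_apply, conj_trivial, eq_comm, smul_eq_mul, one_mul]
  split_ifs <;> ring

theorem bubble_eq_mul_rpow (hε : 0 < ε) :
    bubble n ξ ε
      = fun y => ε ^ (((n : ℝ) - 2) / 2) * (ε ^ 2 + ‖y - ξ‖ ^ 2) ^ (-(((n : ℝ) - 2) / 2)) := by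
  funext y
  have ht : 0 < ε ^ 2 + ‖y - ξ‖ ^ 2 := by positivity
  rw [bubble, Real.div_rpow hε.le ht.le, Real.rpow_neg ht.le, div_eq_mul_inv]

theorem bubble_sq_eq_mul_rpow (hε : 0 < ε) :
    (fun y => bubble n ξ ε y ^ 2)
      = fun y => (ε ^ (((n : ℝ) - 2) / 2)) ^ 2 * (ε ^ 2 + ‖y - ξ‖ ^ 2) ^ (-((n : ℝ) - 2)) := by
  funext y
  have ht : 0 ≤ ε ^ 2 + ‖y - ξ‖ ^ 2 := by positivity
  rw [bubble_eq_mul_rpow ξ hε, mul_pow, ← Real.rpow_mul_natCast ht]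
  push_cast
  ring_nf

theorem pder_bubble (hε : 0 < ε) (i : Fin n) (x : EuclideanSpace ℝ (Fin n)) :
    pder n i (bubble n ξ ε) x
      = -((n : ℝ) - 2) * ε ^ (((n : ℝ) - 2) / 2)
          * (ε ^ 2 + ‖x - ξ‖ ^ 2) ^ (-(((n : ℝ) - 2) / 2) - 1) * (x i - ξ i) := by
  rw [bubble_eq_mul_rpow ξ hε, pder_const_mul_rpow_sq_add_dist_sq ξ hε.ne']
  ring

theorem pder_bubble_sq (hε : 0 < ε) (k : Fin n) :
    pder n k (fun y => bubble n ξ ε y ^ 2)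
      = fun y => -2 * ((n : ℝ) - 2) * (ε ^ (((n : ℝ) - 2) / 2)) ^ 2
          * ((ε ^ 2 + ‖y - ξ‖ ^ 2) ^ (1 - (n : ℝ)) * (y k - ξ k)) := by
  funext y
  rw [bubble_sq_eq_mul_rpow ξ hε, pder_const_mul_rpow_sq_add_dist_sq ξ hε.ne',
    show -((n : ℝ) - 2) - 1 = 1 - n by ring]
  ring

theorem pder_pder_bubble_sq (hε : 0 < ε) (i k : Fin n) (x : EuclideanSpace ℝ (Fin n)) :
    pder n i (pder n k (fun y => bubble n ξ ε y ^ 2)) x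
      = -2 * ((n : ℝ) - 2) * (ε ^ (((n : ℝ) - 2) / 2)) ^ 2
          * (2 * (1 - n) * (ε ^ 2 + ‖x - ξ‖ ^ 2) ^ (-(n : ℝ)) * (x i - ξ i) * (x k - ξ k)
            + (ε ^ 2 + ‖x - ξ‖ ^ 2) ^ (1 - (n : ℝ)) * if i = k then 1 else 0) := by
  rw [pder_bubble_sq ξ hε, pder_const_mul_rpow_sq_add_dist_sq_mul_sub ξ hε.ne',
    show 1 - (n : ℝ) - 1 = -n by ring]

end Bubble

noncomputable def bubbleTensor (n : ℕ) (ξ : EuclideanSpace ℝ (Fin n)) (ε : ℝ)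
    (x : EuclideanSpace ℝ (Fin n)) (i k : Fin n) : ℝ :=
  pder n i (bubble n ξ ε) x * pder n k (bubble n ξ ε) x
    - ((n : ℝ) - 2) / (4 * ((n : ℝ) - 1)) * pder n i (pder n k (fun y => bubble n ξ ε y ^ 2)) x

theorem bubbleTensor_eq_mul_ite {n : ℕ} (hn : n ≠ 1) (ξ : EuclideanSpace ℝ (Fin n)) {ε : ℝ}
    (hε : 0 < ε) (x : EuclideanSpace ℝ (Fin n)) (i k : Fin n) :
    bubbleTensor n ξ ε x i k
      = ((n : ℝ) - 2) ^ 2 / (2 * ((n : ℝ) - 1)) * (ε ^ (((n : ℝ) - 2) / 2)) ^ 2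
          * (ε ^ 2 + ‖x - ξ‖ ^ 2) ^ (1 - (n : ℝ)) * if i = k then 1 else 0 := by
  have ht : 0 < ε ^ 2 + ‖x - ξ‖ ^ 2 := by positivity
  have hpow : (ε ^ 2 + ‖x - ξ‖ ^ 2) ^ (-(((n : ℝ) - 2) / 2) - 1)
      * (ε ^ 2 + ‖x - ξ‖ ^ 2) ^ (-(((n : ℝ) - 2) / 2) - 1) = (ε ^ 2 + ‖x - ξ‖ ^ 2) ^ (-(n : ℝ)) := by
    rw [← Real.rpow_add ht]
    ring_nf
  have hn1 : (n : ℝ) - 1 ≠ 0 := sub_ne_zero.2 (by exact_mod_cast hn)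
  have hgrad : pder n i (bubble n ξ ε) x * pder n k (bubble n ξ ε) x
      = ((n : ℝ) - 2) ^ 2 * (ε ^ (((n : ℝ) - 2) / 2)) ^ 2 * (ε ^ 2 + ‖x - ξ‖ ^ 2) ^ (-(n : ℝ))
          * (x i - ξ i) * (x k - ξ k) := by
    rw [pder_bubble ξ hε, pder_bubble ξ hε, ← hpow]
    ring
  rw [bubbleTensor, hgrad, pder_pder_bubble_sq ξ hε]
  field_simp
  ring

theorem stmt_3 (n : ℕ) (hn : 3 ≤ n) (ξ : EuclideanSpace ℝ (Fin n)) (ε : ℝ) (hε : 0 < ε)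
    (i k : Fin n) (x : EuclideanSpace ℝ (Fin n)) :
    pder n i (bubble n ξ ε) x * pder n k (bubble n ξ ε) x
      - ((n : ℝ) - 2) / (4 * ((n : ℝ) - 1)) *
          pder n i (pder n k (fun y => bubble n ξ ε y ^ 2)) x
    = (1 / (n : ℝ)) *
        ((∑ l, (pder n l (bubble n ξ ε) x) ^ 2)
          - ((n : ℝ) - 2) / (4 * ((n : ℝ) - 1)) *
              (∑ l, pder n l (pder n l (fun y => bubble n ξ ε y ^ 2)) x)) *
        (if i = k then 1 else 0) := by
  have htrace : (∑ l, (pder n l (bubble n ξ ε) x) ^ 2)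
      - ((n : ℝ) - 2) / (4 * ((n : ℝ) - 1)) *
          (∑ l, pder n l (pder n l (fun y => bubble n ξ ε y ^ 2)) x)
      = ∑ l, bubbleTensor n ξ ε x l l := by
    simp only [bubbleTensor, Finset.sum_sub_distrib, Finset.mul_sum, sq]
  rw [htrace]
  exact (eq_one_div_card_mul_trace_mul_ite (bubbleTensor n ξ ε x) _
    (bubbleTensor_eq_mul_ite (by omega) ξ hε x) i k).trans (by rw [Fintype.card_fin])
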